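/- Let C be a polygonal curve with vertices p_0, …, p_m and L(C) > 0. Then every pair of consecutive vertices of the arclength respacing f(C) satisfies the lower bound ‖f(p_k) − f(p_{k−1})‖ ≥ L(C)/m − (L(C) − L(f(C))) for k = 1, …, m. -/

import Mathlib

open Finset Filter

noncomputable section

/-- The length of the polygonal curve with vertices `p 0, …, p m`
(also the arclength distance from `p 0` to `p m` along the curve). -/
def polyLength {dim : ℕ} (p : ℕ → EuclideanSpace ℝ (Fin dim)) (m : ℕ) : ℝ :=
  ∑ i ∈ Finset.range m, ‖p (i + 1) - p i‖

/-- `P` is the arclength-parameterized linear interpolation of the polygonal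
curve with vertices `p 0, …, p m`:
`P ((1-t)·d_{k-1} + t·d_k) = (1-t)·p_{k-1} + t·p_k` for `t ∈ [0,1]`, `k = 1, …, m`,
where `d_k = polyLength p k` is the arclength up to vertex `k`. -/
def IsArcParam {dim : ℕ} (p : ℕ → EuclideanSpace ℝ (Fin dim)) (m : ℕ)
    (P : ℝ → EuclideanSpace ℝ (Fin dim)) : Prop :=
  ∀ k : ℕ, 1 ≤ k → k ≤ m → ∀ t : ℝ, 0 ≤ t → t ≤ 1 →
    P ((1 - t) * polyLength p (k - 1) + t * polyLength p k)
      = (1 - t) • p (k - 1) + t • p k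

/-- The polygonal curve with vertices `p 0, …, p m` is equilateral:
all consecutive interpoint distances agree. -/
def IsEquilateral {dim : ℕ} (p : ℕ → EuclideanSpace ℝ (Fin dim)) (m : ℕ) : Prop :=
  ∀ k l : ℕ, 1 ≤ k → k ≤ m → 1 ≤ l → l ≤ m →
    ‖p k - p (k - 1)‖ = ‖p l - p (l - 1)‖

/-- `q 0, …, q m` are the vertices of the arclength respacing `f(C)` of the
polygonal curve `C` with vertices `p 0, …, p m`:
`q k = P (k·L(C)/m)` where `P` is the arclength parameterization of `C`;
by convention `f(C) := C` when `L(C) = 0`. -/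
def Respaces {dim : ℕ} (m : ℕ) (p q : ℕ → EuclideanSpace ℝ (Fin dim)) : Prop :=
  (polyLength p m = 0 ∧ ∀ k ≤ m, q k = p k) ∨
  (0 < polyLength p m ∧ ∃ P : ℝ → EuclideanSpace ℝ (Fin dim), IsArcParam p m P ∧
    ∀ k ≤ m, q k = P ((k : ℝ) * polyLength p m / m))

/-!
The arclength parameterization is 1-Lipschitz: on each segment it is an isometry onto that
segment, and these Lipschitz bounds glue along consecutive intervals by the triangle inequality.
Hence every step of the respacing has length at most `L(C)/m`, so the `m - 1` steps other than
the `k`-th contribute at most `(m - 1) L(C)/m` to `L(f(C))`, which leaves at least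
`L(f(C)) - (m - 1) L(C)/m` for the `k`-th step.
-/

open Set
open scoped NNReal

theorem LipschitzOnWith.Icc_union_Icc {E : Type*} [PseudoMetricSpace E] {f : ℝ → E} {K : ℝ≥0}
    {x y z : ℝ} (h₁ : LipschitzOnWith K f (Icc x y)) (h₂ : LipschitzOnWith K f (Icc y z)) :
    LipschitzOnWith K f (Icc x z) := by
  refine LipschitzOnWith.of_dist_le_mul fun a ha b hb => ?_
  wlog hab : a ≤ b generalizing a b
  · rw [dist_comm, dist_comm a]
    exact this b hb a ha (le_of_not_ge hab)
  rcases le_total b y with hby | hyb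
  · exact h₁.dist_le_mul a ⟨ha.1, hab.trans hby⟩ b ⟨hb.1, hby⟩
  rcases le_total y a with hya | hay
  · exact h₂.dist_le_mul a ⟨hya, ha.2⟩ b ⟨hya.trans hab, hb.2⟩
  have hy₁ : y ∈ Icc x y := ⟨ha.1.trans hay, le_rfl⟩
  have hy₂ : y ∈ Icc y z := ⟨le_rfl, hyb.trans hb.2⟩
  calc dist (f a) (f b) ≤ dist (f a) (f y) + dist (f y) (f b) := dist_triangle _ _ _
    _ ≤ K * dist a y + K * dist y b :=
        add_le_add (h₁.dist_le_mul a ⟨ha.1, hay⟩ y hy₁) (h₂.dist_le_mul y hy₂ b ⟨hyb, hb.2⟩)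
    _ = K * dist a b := by
        simp only [Real.dist_eq, abs_of_nonpos (sub_nonpos.2 hay),
          abs_of_nonpos (sub_nonpos.2 hyb), abs_of_nonpos (sub_nonpos.2 hab)]
        ring

theorem Finset.sum_le_add_card_sub_one_mul {ι : Type*} [DecidableEq ι] {s : Finset ι}
    {f : ι → ℝ} {c : ℝ} {j : ι} (hj : j ∈ s) (h : ∀ i ∈ s, f i ≤ c) :
    ∑ i ∈ s, f i ≤ f j + ((#s : ℝ) - 1) * c := by
  rw [← add_sum_erase s f hj, ← cast_card_erase_of_mem hj, ← nsmul_eq_mul]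
  exact add_le_add le_rfl (sum_le_card_nsmul _ _ _ fun i hi => h i (mem_of_mem_erase hi))

section ArcParam

variable {dim m : ℕ} {p : ℕ → EuclideanSpace ℝ (Fin dim)}

lemma polyLength_nonneg (p : ℕ → EuclideanSpace ℝ (Fin dim)) (k : ℕ) : 0 ≤ polyLength p k :=
  sum_nonneg fun _ _ => norm_nonneg _

lemma polyLength_zero (p : ℕ → EuclideanSpace ℝ (Fin dim)) : polyLength p 0 = 0 := by
  simp [polyLength]

lemma polyLength_succ (p : ℕ → EuclideanSpace ℝ (Fin dim)) (j : ℕ) :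
    polyLength p (j + 1) = polyLength p j + ‖p (j + 1) - p j‖ :=
  sum_range_succ _ _

variable {P : ℝ → EuclideanSpace ℝ (Fin dim)}

/- For a segment of length `0` the parameter is `x / 0 = 0`, and both sides are `p j`. -/
lemma IsArcParam.eq_lineMap (hP : IsArcParam p m P) {j : ℕ} (hj : j < m) {a : ℝ}
    (ha : a ∈ Icc (polyLength p j) (polyLength p (j + 1))) :
    P a = AffineMap.lineMap (p j) (p (j + 1))
      ((a - polyLength p j) / ‖p (j + 1) - p j‖) := by
  rw [polyLength_succ] at ha
  have hc : (a - polyLength p j) / ‖p (j + 1) - p j‖ * ‖p (j + 1) - p j‖ = a - polyLength p j :=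
    div_mul_cancel_of_imp fun h => by linarith [ha.1, ha.2, h]
  have h := hP (j + 1) (by omega) hj ((a - polyLength p j) / ‖p (j + 1) - p j‖)
    (div_nonneg (by linarith [ha.1]) (norm_nonneg _))
    (div_le_one_of_le₀ (by linarith [ha.2]) (norm_nonneg _))
  rw [Nat.add_sub_cancel, polyLength_succ] at h
  rw [AffineMap.lineMap_apply_module, ← h]
  congr 1
  linear_combination -hc

lemma IsArcParam.lipschitzOnWith_segment (hP : IsArcParam p m P) {j : ℕ} (hj : j < m) :
    LipschitzOnWith 1 P (Icc (polyLength p j) (polyLength p (j + 1))) := by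
  refine LipschitzOnWith.of_dist_le_mul fun a ha b hb => ?_
  rw [hP.eq_lineMap hj ha, hP.eq_lineMap hj hb, dist_lineMap_lineMap, dist_comm (p j),
    dist_eq_norm (p (j + 1)), NNReal.coe_one, one_mul, Real.dist_eq, Real.dist_eq,
    div_sub_div_same, sub_sub_sub_cancel_right, abs_div, abs_norm]
  refine (div_mul_cancel_of_imp fun h => ?_).le
  rw [polyLength_succ, h, add_zero, Set.Icc_self, mem_singleton_iff] at ha hb
  rw [ha, hb, sub_self, abs_zero]

lemma IsArcParam.lipschitzOnWith (hP : IsArcParam p m P) :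
    LipschitzOnWith 1 P (Icc 0 (polyLength p m)) := by
  suffices ∀ n ≤ m, LipschitzOnWith 1 P (Icc 0 (polyLength p n)) from this m le_rfl
  intro n
  induction n with
  | zero =>
    intro _
    refine LipschitzOnWith.of_dist_le_mul fun a ha b hb => ?_
    rw [polyLength_zero, Set.Icc_self, mem_singleton_iff] at ha hb
    simp [ha, hb]
  | succ n ih =>
    intro hn
    exact (ih (by omega)).Icc_union_Icc (hP.lipschitzOnWith_segment hn)

lemma IsArcParam.norm_respacing_step_le {q : ℕ → EuclideanSpace ℝ (Fin dim)}
    (hP : IsArcParam p m P)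
    (hq : ∀ k ≤ m, q k = P ((k : ℝ) * polyLength p m / m)) {i : ℕ} (hi : i < m) :
    ‖q (i + 1) - q i‖ ≤ polyLength p m / m := by
  have hm : (0 : ℝ) < m := by exact_mod_cast (show 0 < m by omega)
  have hL := polyLength_nonneg p m
  have hmem : ∀ k ≤ m, (k : ℝ) * polyLength p m / m ∈ Icc 0 (polyLength p m) := fun k hk =>
    ⟨by positivity, div_le_of_le_mul₀ hm.le hL (by rw [mul_comm]; gcongr)⟩
  rw [hq _ hi, hq _ hi.le, ← dist_eq_norm]
  calc dist (P _) (P _) ≤ 1 * dist _ _ :=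
        hP.lipschitzOnWith.dist_le_mul _ (hmem _ hi) _ (hmem _ hi.le)
    _ = polyLength p m / m := by
        rw [one_mul, Real.dist_eq, ← sub_div, ← sub_mul, Nat.cast_succ, add_sub_cancel_left,
          one_mul, abs_of_nonneg (by positivity)]

end ArcParam

theorem stmt12_general {dim m : ℕ} (p : ℕ → EuclideanSpace ℝ (Fin dim))
    (P : ℝ → EuclideanSpace ℝ (Fin dim)) (hP : IsArcParam p m P)
    (q : ℕ → EuclideanSpace ℝ (Fin dim))
    (hq : ∀ k ≤ m, q k = P ((k : ℝ) * polyLength p m / m)) :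
    ∀ k : ℕ, 1 ≤ k → k ≤ m →
      polyLength p m / m - (polyLength p m - polyLength q m)
        ≤ ‖q k - q (k - 1)‖ := by
  intro k hk1 hkm
  obtain ⟨j, rfl⟩ : ∃ j, k = j + 1 := ⟨k - 1, by omega⟩
  have hm : (m : ℝ) ≠ 0 := by exact_mod_cast (show m ≠ 0 by omega)
  have hsum : polyLength q m ≤ ‖q (j + 1) - q j‖ + ((m : ℝ) - 1) * (polyLength p m / m) := by
    have h := sum_le_add_card_sub_one_mul (mem_range.2 hkm)
      fun i hi => hP.norm_respacing_step_le hq (mem_range.1 hi)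
    rwa [card_range] at h
  have hsteps : ((m : ℝ) - 1) * (polyLength p m / m) = polyLength p m - polyLength p m / m := by
    field_simp
  rw [Nat.add_sub_cancel]
  linarith

/-- Lower bound on distances between consecutive vertices of the arclength
respacing: `‖f(p k) - f(p (k-1))‖ ≥ L(C)/m - (L(C) - L(f(C)))`. -/
theorem stmt12 {dim m : ℕ} (hm : 1 ≤ m) (p : ℕ → EuclideanSpace ℝ (Fin dim))
    (hL : 0 < polyLength p m)
    (P : ℝ → EuclideanSpace ℝ (Fin dim)) (hP : IsArcParam p m P)
    (q : ℕ → EuclideanSpace ℝ (Fin dim))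
    (hq : ∀ k ≤ m, q k = P ((k : ℝ) * polyLength p m / m)) :
    ∀ k : ℕ, 1 ≤ k → k ≤ m →
      polyLength p m / m - (polyLength p m - polyLength q m)
        ≤ ‖q k - q (k - 1)‖ :=
  stmt12_general p P hP q hq

end
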